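/- For each integer k ≥ 0, let P_k(x) = −Σ_{j=0}^{⌊(k-1)/2⌋} (-4x)^j / (2^{2k-1}·(2j+1)!) · C(2k-2j-1,k) and Q_k(x) = Σ_{j=0}^{⌊k/2⌋} (-4x)^j / (2^{2k}·(2j)!) · C(2k-2j,k), as polynomials over ℚ. Then P_0 = 0, Q_0 = 1, and for every k ≥ 0 these polynomials satisfy the recurrences (k+1)·P_{k+1}(x) = k·P_k(x) − x·P_k'(x) − (1/2)·Q_k(x) and (k+1)·Q_{k+1}(x) = ((2k+1)/2)·Q_k(x) − x·Q_k'(x) + (x/2)·P_k(x). -/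

import Mathlib

open Finset Polynomial

/-- The polynomial `P_k(x) = -∑_{j=0}^{⌊(k-1)/2⌋} (-4x)^j / (2^{2k-1} (2j+1)!) · C(2k-2j-1, k)`
over `ℚ`.  (The sum has `⌊(k+1)/2⌋` terms; it is empty for `k = 0`.) -/
noncomputable def P (k : ℕ) : Polynomial ℚ :=
  -∑ j ∈ Finset.range ((k + 1) / 2),
    Polynomial.C ((-4 : ℚ) ^ j / (2 ^ (2 * k - 1) * (Nat.factorial (2 * j + 1)))
        * (Nat.choose (2 * k - 2 * j - 1) k))
      * Polynomial.X ^ j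

/-- The polynomial `Q_k(x) = ∑_{j=0}^{⌊k/2⌋} (-4x)^j / (2^{2k} (2j)!) · C(2k-2j, k)` over `ℚ`. -/
noncomputable def Q (k : ℕ) : Polynomial ℚ :=
  ∑ j ∈ Finset.range (k / 2 + 1),
    Polynomial.C ((-4 : ℚ) ^ j / (2 ^ (2 * k) * (Nat.factorial (2 * j)))
        * (Nat.choose (2 * k - 2 * j) k))
      * Polynomial.X ^ j

/-!
Both recurrences are checked coefficientwise. For `k ≥ 1` the coefficient of `x^n` in `P_k` and
`Q_k` is given by the summand formula for every `n`, because the binomial coefficient vanishes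
once `2n` exceeds `k` (for `k = 0` the truncated subtraction gives `C(0, 0) = 1`, so that case is
computed directly). After factoring out `(-4)^n / (2^{2k} (2n)!)`, each recurrence becomes a
binomial identity which, with `m = 2k - 2n`, follows from `(m+1) C(m,k) = (k+1) C(m+1,k+1)` and
`m C(m-1,k) = (m-k) C(m,k)`.
-/

theorem cast_mul_choose_sub_one {R : Type*} [CommRing R] (m k : ℕ) :
    (m : R) * ((m - 1).choose k : R) = ((m : R) - k) * (m.choose k : R) := by
  rcases m with _ | m
  · rcases k with _ | k <;> simp
  · rcases le_or_gt k (m + 1) with hk | hk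
    · have h := congrArg (Nat.cast : ℕ → R) (Nat.choose_mul_succ_eq m k)
      push_cast [hk] at h
      simpa [mul_comm] using h
    · simp [Nat.choose_eq_zero_of_lt hk, Nat.choose_eq_zero_of_lt (Nat.lt_of_succ_lt hk)]

theorem cast_add_one_mul_choose_eq {R : Type*} [CommRing R] (m k : ℕ) :
    ((m : R) + 1) * (m.choose k : R) = ((m + 1).choose (k + 1) : R) * ((k : R) + 1) := by
  exact_mod_cast congrArg (Nat.cast : ℕ → R) (Nat.add_one_mul_choose_eq m k)

theorem choose_identity_of_P_succ {k : ℕ} (hk : 0 < k) (n : ℕ) :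
    ((k : ℚ) + 1) * ((2 * k + 1 - 2 * n).choose (k + 1) : ℚ)
      = 4 * ((k : ℚ) - n) * ((2 * k - 2 * n - 1).choose k : ℚ)
        + (2 * n + 1) * ((2 * k - 2 * n).choose k : ℚ) := by
  rcases le_or_gt n k with hnk | hkn
  · obtain ⟨m, rfl⟩ : ∃ m, k = n + m := ⟨k - n, by omega⟩
    rw [show 2 * (n + m) + 1 - 2 * n = 2 * m + 1 by omega,
      show 2 * (n + m) - 2 * n - 1 = 2 * m - 1 by omega,
      show 2 * (n + m) - 2 * n = 2 * m by omega]
    have h₁ := cast_add_one_mul_choose_eq (R := ℚ) (2 * m) (n + m)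
    have h₂ := cast_mul_choose_sub_one (R := ℚ) (2 * m) (n + m)
    push_cast at h₁ h₂ ⊢
    linear_combination -h₁ - 2 * h₂
  · rw [Nat.choose_eq_zero_of_lt (by omega : 2 * k + 1 - 2 * n < k + 1),
      Nat.choose_eq_zero_of_lt (by omega : 2 * k - 2 * n - 1 < k),
      Nat.choose_eq_zero_of_lt (by omega : 2 * k - 2 * n < k)]
    simp

theorem choose_identity_of_Q_succ {k : ℕ} (hk : 0 < k) (n : ℕ) :
    ((k : ℚ) + 1) * ((2 * k + 2 - 2 * n).choose (k + 1) : ℚ)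
      = 2 * (2 * (k : ℚ) + 1 - 2 * n) * ((2 * k - 2 * n).choose k : ℚ)
        + 2 * n * ((2 * k + 1 - 2 * n).choose k : ℚ) := by
  rcases le_or_gt n k with hnk | hkn
  · obtain ⟨m, rfl⟩ : ∃ m, k = n + m := ⟨k - n, by omega⟩
    rw [show 2 * (n + m) + 2 - 2 * n = 2 * m + 1 + 1 by omega,
      show 2 * (n + m) + 1 - 2 * n = 2 * m + 1 by omega,
      show 2 * (n + m) - 2 * n = 2 * m + 1 - 1 by omega]
    have h₁ := cast_add_one_mul_choose_eq (R := ℚ) (2 * m + 1) (n + m)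
    have h₂ := cast_mul_choose_sub_one (R := ℚ) (2 * m + 1) (n + m)
    push_cast at h₁ h₂ ⊢
    linear_combination -h₁ - 2 * h₂
  · rw [Nat.choose_eq_zero_of_lt (by omega : 2 * k + 2 - 2 * n < k + 1),
      Nat.choose_eq_zero_of_lt (by omega : 2 * k + 1 - 2 * n < k),
      Nat.choose_eq_zero_of_lt (by omega : 2 * k - 2 * n < k)]
    simp

theorem coeff_X_mul_derivative {R : Type*} [Semiring R] (p : R[X]) (n : ℕ) :
    (X * derivative p).coeff n = p.coeff n * n := by
  rcases n with _ | n
  · simp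
  · rw [coeff_X_mul, coeff_derivative, Nat.cast_add_one]

noncomputable def coeffWeight (k n : ℕ) : ℚ := (-4) ^ n / (2 ^ (2 * k) * (2 * n).factorial)

theorem coeffWeight_succ_left (k n : ℕ) : coeffWeight (k + 1) n = coeffWeight k n / 4 := by
  rw [coeffWeight, coeffWeight, mul_add, pow_add]
  field_simp
  norm_num

theorem coeff_Q {k : ℕ} (hk : 0 < k) (n : ℕ) :
    (Q k).coeff n = coeffWeight k n * (2 * k - 2 * n).choose k := by
  simp only [Q, finsetSum_coeff, coeff_C_mul_X_pow, Finset.sum_ite_eq, Finset.mem_range]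
  split_ifs with hn
  · rfl
  · rw [Nat.choose_eq_zero_of_lt (by omega), Nat.cast_zero, mul_zero]

theorem coeff_P {k : ℕ} (hk : 0 < k) (n : ℕ) :
    (P k).coeff n = -2 * coeffWeight k n / (2 * n + 1) * (2 * k - 2 * n - 1).choose k := by
  simp only [P, coeff_neg, finsetSum_coeff, coeff_C_mul_X_pow, Finset.sum_ite_eq,
    Finset.mem_range]
  split_ifs with hn
  · rw [coeffWeight, show 2 * k = 2 * k - 1 + 1 by omega, pow_succ, Nat.factorial_succ]
    push_cast
    field_simp
  · rw [Nat.choose_eq_zero_of_lt (by omega), Nat.cast_zero, mul_zero, neg_zero]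

theorem coeff_X_mul_P {k : ℕ} (hk : 0 < k) (n : ℕ) :
    (X * P k).coeff n = n * coeffWeight k n * (2 * k + 1 - 2 * n).choose k := by
  rcases n with _ | n
  · simp
  · rw [coeff_X_mul, coeff_P hk, show 2 * k + 1 - 2 * (n + 1) = 2 * k - 2 * n - 1 by omega,
      coeffWeight, coeffWeight, show 2 * (n + 1) = 2 * n + 1 + 1 by ring, Nat.factorial_succ,
      Nat.factorial_succ]
    push_cast
    field_simp
    ring

theorem C_mul_P_succ {k : ℕ} (hk : 0 < k) :
    C ((k : ℚ) + 1) * P (k + 1)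
      = C (k : ℚ) * P k - X * derivative (P k) - C (1 / 2 : ℚ) * Q k := by
  ext n
  simp only [coeff_sub, coeff_C_mul, coeff_X_mul_derivative, coeff_P hk, coeff_Q hk,
    coeff_P k.succ_pos, coeffWeight_succ_left]
  rw [show 2 * (k + 1) - 2 * n - 1 = 2 * k + 1 - 2 * n by omega]
  have h2n : (2 * n + 1 : ℚ) ≠ 0 := by positivity
  linear_combination (norm := (field_simp; ring))
    -coeffWeight k n / (2 * (2 * n + 1)) * choose_identity_of_P_succ hk n

theorem C_mul_Q_succ {k : ℕ} (hk : 0 < k) :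
    C ((k : ℚ) + 1) * Q (k + 1)
      = C ((2 * (k : ℚ) + 1) / 2) * Q k - X * derivative (Q k) + C (1 / 2 : ℚ) * X * P k := by
  ext n
  simp only [coeff_add, coeff_sub, coeff_C_mul, mul_assoc, coeff_X_mul_derivative, coeff_X_mul_P hk,
    coeff_Q hk, coeff_Q k.succ_pos, coeffWeight_succ_left]
  rw [show 2 * (k + 1) - 2 * n = 2 * k + 2 - 2 * n by omega]
  linear_combination (coeffWeight k n / 4) * choose_identity_of_Q_succ hk n

theorem P_Q_recurrence :
    P 0 = 0 ∧ Q 0 = 1 ∧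
      ∀ k : ℕ,
        Polynomial.C ((k : ℚ) + 1) * P (k + 1)
            = Polynomial.C (k : ℚ) * P k - Polynomial.X * Polynomial.derivative (P k)
              - Polynomial.C (1 / 2 : ℚ) * Q k
          ∧ Polynomial.C ((k : ℚ) + 1) * Q (k + 1)
            = Polynomial.C ((2 * (k : ℚ) + 1) / 2) * Q k
              - Polynomial.X * Polynomial.derivative (Q k)
              + Polynomial.C (1 / 2 : ℚ) * Polynomial.X * P k := by
  refine ⟨by simp [P], by simp [Q], fun k => ?_⟩
  rcases k.eq_zero_or_pos with rfl | hk
  · norm_num [P, Q]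
    rw [← C_ofNat, ← C_mul]
    norm_num
  · exact ⟨C_mul_P_succ hk, C_mul_Q_succ hk⟩
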